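/- Let P be a non-zero polynomial of degree D on ℝ², and let {O_j} be the connected components of ℝ² \ Z(P). Then any line segment in ℝ² that is not contained in Z(P) intersects at most D+1 of the components O_j; consequently, any rectangle's central line (and hence any tube in the partitioning argument) enters at most O(D) cells. -/

import Mathlib

/-! Restricted to the line through `a` and `b`, the polynomial `P` becomes a one-variable
polynomial `q` of degree at most `D`, which is non-zero because the segment leaves `Z(P)`.
Between two consecutive roots of `q` the segment runs inside `ℝ² \ Z(P)` and so stays in one
component; the at most `D` roots cut the parameter line into at most `D + 1` such pieces. -/

noncomputable section

open Set
open scoped Finset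

/-- The variety `Z(P) = {x ∈ ℝ² : P(x) = 0}` of a polynomial on `ℝ²`. -/
def zeroSet (P : MvPolynomial (Fin 2) ℝ) : Set (EuclideanSpace ℝ (Fin 2)) :=
  {x | MvPolynomial.eval (fun i => x i) P = 0}

open Polynomial in
theorem MvPolynomial.polynomial_eval_aeval {R σ : Type*} [CommSemiring R]
    (P : MvPolynomial σ R) (f : σ → R[X]) (t : R) :
    (aeval f P).eval t = eval (fun i => (f i).eval t) P := by
  rw [aeval_def, polynomial_eval_eval₂]
  congr 1
  ext
  simp

open Polynomial in
theorem MvPolynomial.natDegree_aeval_le {R σ : Type*} [CommSemiring R] (P : MvPolynomial σ R)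
    (f : σ → R[X]) {d : ℕ} (hf : ∀ i, (f i).natDegree ≤ d) :
    (aeval f P).natDegree ≤ d * P.totalDegree := by
  conv_lhs => rw [P.as_sum]
  rw [map_sum]
  refine natDegree_sum_le_of_forall_le _ _ fun m hm => ?_
  rw [aeval_monomial, ← Polynomial.C_eq_algebraMap]
  refine (natDegree_C_mul_le _ _).trans <| (natDegree_prod_le _ _).trans ?_
  calc ∑ i ∈ m.support, (f i ^ m i).natDegree
      ≤ ∑ i ∈ m.support, d * m i :=
        Finset.sum_le_sum fun i _ => natDegree_pow_le.trans (by rw [mul_comm]; gcongr; exact hf i)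
    _ = d * m.sum (fun _ k => k) := by rw [Finsupp.sum, Finset.mul_sum]
    _ ≤ d * P.totalDegree := by gcongr; exact le_totalDegree hm

theorem Finset.forall_notMem_Icc_of_card_filter_lt_eq {α : Type*} [LinearOrder α]
    {F : Finset α} {a b : α} (hab : a ≤ b) (hb : b ∉ F)
    (h : #{x ∈ F | x < a} = #{x ∈ F | x < b}) : ∀ x ∈ Set.Icc a b, x ∉ F := by
  have hsub : {x ∈ F | x < a} ⊆ {x ∈ F | x < b} := fun x hx => by
    rw [mem_filter] at hx ⊢
    exact ⟨hx.1, hx.2.trans_le hab⟩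
  have heq := eq_of_subset_of_card_le hsub h.ge
  rintro x ⟨hax, hxb⟩ hx
  have hxb' : x < b := hxb.lt_of_ne (ne_of_mem_of_not_mem hx hb)
  have hx' : x ∈ {x ∈ F | x < a} := heq ▸ mem_filter.2 ⟨hx, hxb'⟩
  exact (mem_filter.1 hx').2.not_ge hax

section Components

variable {X : Type*} [TopologicalSpace X] {U : Set X} {γ : ℝ → X}

theorem connectedComponentIn_eq_of_image_Icc_subset {t₁ t₂ : ℝ}
    (hγ : ContinuousOn γ (Icc t₁ t₂)) (hle : t₁ ≤ t₂) (hU : γ '' Icc t₁ t₂ ⊆ U) :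
    connectedComponentIn U (γ t₁) = connectedComponentIn U (γ t₂) :=
  connectedComponentIn_eq <| (isPreconnected_Icc.image γ hγ).subset_connectedComponentIn
    (mem_image_of_mem γ (left_mem_Icc.2 hle)) hU (mem_image_of_mem γ (right_mem_Icc.2 hle))

theorem ncard_le_card_add_one_of_forall_eq_connectedComponentIn (hγ : Continuous γ)
    (F : Finset ℝ) (hF : ∀ t ∉ F, γ t ∈ U) {S : Set (Set X)}
    (hS : ∀ O ∈ S, ∃ t ∉ F, O = connectedComponentIn U (γ t)) :
    S.ncard ≤ F.card + 1 := by
  choose! τ hτF hτ using hS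
  -- The component of `γ t` only depends on how many times of `F` precede `t`.
  let N : ℝ → ℕ := fun t => #{s ∈ F | s < t}
  have hN : ∀ t₁ t₂, t₁ ≤ t₂ → t₂ ∉ F → N t₁ = N t₂ →
      connectedComponentIn U (γ t₁) = connectedComponentIn U (γ t₂) := by
    intro t₁ t₂ hle ht₂ hNeq
    refine connectedComponentIn_eq_of_image_Icc_subset hγ.continuousOn hle ?_
    rintro _ ⟨s, hs, rfl⟩
    exact hF s (Finset.forall_notMem_Icc_of_card_filter_lt_eq hle ht₂ hNeq s hs)
  calc S.ncard ≤ (Finset.range (F.card + 1) : Set ℕ).ncard := by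
        refine ncard_le_ncard_of_injOn (fun O => N (τ O)) ?_ ?_ (Finset.finite_toSet _)
        · intro O _
          simpa [Nat.lt_succ_iff] using Finset.card_filter_le F _
        · intro O₁ h₁ O₂ h₂ hNeq
          rw [hτ O₁ h₁, hτ O₂ h₂]
          rcases le_total (τ O₁) (τ O₂) with h | h
          · exact hN _ _ h (hτF O₂ h₂) hNeq
          · exact (hN _ _ h (hτF O₁ h₁) hNeq.symm).symm
    _ = F.card + 1 := by rw [ncard_coe_finset, Finset.card_range]

end Components

open Polynomial in
theorem segment_meets_few_components_general
    (P : MvPolynomial (Fin 2) ℝ) (D : ℕ) (hdeg : P.totalDegree = D)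
    (a b : EuclideanSpace ℝ (Fin 2)) (hseg : ¬ segment ℝ a b ⊆ zeroSet P) :
    Set.ncard {O : Set (EuclideanSpace ℝ (Fin 2)) |
        ∃ x ∈ segment ℝ a b, x ∉ zeroSet P ∧ O = connectedComponentIn (zeroSet P)ᶜ x}
      ≤ D + 1 := by
  set q : ℝ[X] := MvPolynomial.aeval (fun i => C (b i - a i) * X + C (a i)) P
  have hq : ∀ t, q.eval t = 0 ↔ AffineMap.lineMap a b t ∈ zeroSet P := fun t => by
    simp only [q, MvPolynomial.polynomial_eval_aeval, zeroSet, mem_ofPred_eq,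
      AffineMap.lineMap_apply_module, PiLp.add_apply, PiLp.smul_apply, smul_eq_mul,
      eval_add, eval_C, eval_mul, eval_X]
    congr! 3
    funext i
    ring
  have hdq : q.natDegree ≤ D := by
    simpa only [one_mul, hdeg] using P.natDegree_aeval_le _ fun _ => natDegree_linear_le
  rw [segment_eq_image_lineMap] at hseg ⊢
  have hq0 : q ≠ 0 := fun hq0 => hseg <| by
    rintro _ ⟨t, -, rfl⟩
    exact (hq t).1 (by rw [hq0, eval_zero])
  have hroots : ∀ t, t ∈ q.roots.toFinset ↔ AffineMap.lineMap a b t ∈ zeroSet P := fun t => by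
    rw [Multiset.mem_toFinset, mem_roots hq0, IsRoot.def, hq]
  refine (ncard_le_card_add_one_of_forall_eq_connectedComponentIn
    (U := (zeroSet P)ᶜ) (AffineMap.lineMap_continuous (p := a) (q := b))
    q.roots.toFinset (fun t ht => ?_) ?_).trans ?_
  · exact mt (hroots t).2 ht
  · rintro O ⟨_, ⟨t, -, rfl⟩, hx, rfl⟩
    exact ⟨t, mt (hroots t).1 hx, rfl⟩
  · exact Nat.succ_le_succ <| q.roots.toFinset_card_le.trans <| (card_roots' q).trans hdq

/-- **A line segment meets few cells.** Let `P` be a non-zero polynomial of degree `D` on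
`ℝ²` and let the `O_j` be the connected components of `ℝ² \ Z(P)`. Then any line segment
that is not contained in `Z(P)` intersects at most `D + 1` of the components `O_j`; this is
the geometric fact (a consequence of the fundamental theorem of algebra) asserting that any
tube in the partitioning argument enters at most `O(D)` cells. -/
theorem segment_meets_few_components
    (P : MvPolynomial (Fin 2) ℝ) (hP : P ≠ 0) (D : ℕ) (hdeg : P.totalDegree = D)
    (a b : EuclideanSpace ℝ (Fin 2)) (hseg : ¬ segment ℝ a b ⊆ zeroSet P) :
    Set.ncard {O : Set (EuclideanSpace ℝ (Fin 2)) |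
        ∃ x ∈ segment ℝ a b, x ∉ zeroSet P ∧ O = connectedComponentIn (zeroSet P)ᶜ x}
      ≤ D + 1 :=
  segment_meets_few_components_general P D hdeg a b hseg
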